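/- Let A be a symmetric positive semidefinite n×n real matrix whose nullspace is spanned by the all-ones vector 1, and let F be an n×m real matrix and T a positive definite diagonal m×m matrix such that F^T 1 ≠ 0. Then A + F T F^T is symmetric positive definite. -/

import Mathlib

open Matrix

/-!
Both summands are positive semidefinite, so a vector `x` with `xᵀ (A + F T Fᵀ) x = 0` lies
in the kernels of `A` and of `F T Fᵀ`. The first forces `x = c • 𝟙`; the second forces
`Fᵀ x = 0` because `T` is positive definite, i.e. `c • Fᵀ 𝟙 = 0`, hence `c = 0`.
-/

namespace Matrix

open scoped ComplexOrder

variable {n m 𝕜 : Type*} [Fintype n] [Fintype m] [RCLike 𝕜]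

theorem PosSemidef.posDef_add_of_mulVec_eq_zero {A B : Matrix n n 𝕜}
    (hA : A.PosSemidef) (hB : B.PosSemidef)
    (hker : ∀ x, A *ᵥ x = 0 → B *ᵥ x = 0 → x = 0) : (A + B).PosDef := by
  refine .of_dotProduct_mulVec_pos (hA.isHermitian.add hB.isHermitian) fun x hx => ?_
  have hAx := hA.dotProduct_mulVec_nonneg x
  have hBx := hB.dotProduct_mulVec_nonneg x
  rw [add_mulVec, dotProduct_add]
  refine (add_nonneg hAx hBx).lt_of_ne' fun hsum => hx (hker x ?_ ?_)
  · exact (hA.dotProduct_mulVec_zero_iff x).mp ((add_eq_zero_iff_of_nonneg hAx hBx).mp hsum).1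
  · exact (hB.dotProduct_mulVec_zero_iff x).mp ((add_eq_zero_iff_of_nonneg hAx hBx).mp hsum).2

theorem PosDef.conjTranspose_mulVec_eq_zero_of_mul_mul_conjTranspose {D : Matrix m m 𝕜}
    (hD : D.PosDef) (F : Matrix n m 𝕜) {x : n → 𝕜} (hx : (F * D * Fᴴ) *ᵥ x = 0) :
    Fᴴ *ᵥ x = 0 := by
  by_contra hy
  have hquad : star x ⬝ᵥ (F * D * Fᴴ) *ᵥ x = star (Fᴴ *ᵥ x) ⬝ᵥ D *ᵥ (Fᴴ *ᵥ x) := by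
    rw [← mulVec_mulVec, ← mulVec_mulVec, dotProduct_mulVec, star_mulVec,
      conjTranspose_conjTranspose]
  exact (hD.dotProduct_mulVec_pos hy).ne' <| by rw [← hquad, hx, dotProduct_zero]

end Matrix

/-- If `A` is symmetric positive semidefinite with nullspace spanned by the
all-ones vector, `T` is a positive-definite diagonal matrix, and `Fᵀ 𝟙 ≠ 0`,
then `A + F T Fᵀ` is symmetric positive definite. -/
theorem stmt0 {n m : ℕ} (A : Matrix (Fin n) (Fin n) ℝ)
    (F : Matrix (Fin n) (Fin m) ℝ) (d : Fin m → ℝ)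
    (hA : A.PosSemidef)
    (hnull : ∀ x : Fin n → ℝ, A *ᵥ x = 0 ↔ ∃ c : ℝ, x = c • (fun _ => (1 : ℝ)))
    (hd : ∀ i, 0 < d i)
    (hF : Fᵀ *ᵥ (fun _ => (1 : ℝ)) ≠ 0) :
    (A + F * Matrix.diagonal d * Fᵀ).PosDef := by
  have hT : (diagonal d).PosDef := posDef_diagonal_iff.mpr hd
  rw [← conjTranspose_eq_transpose_of_trivial] at hF ⊢
  refine hA.posDef_add_of_mulVec_eq_zero (hT.posSemidef.mul_mul_conjTranspose_same F)
    fun x hAx hBx => ?_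
  obtain ⟨c, rfl⟩ := (hnull x).mp hAx
  have hc : c • (Fᴴ *ᵥ fun _ => (1 : ℝ)) = 0 := by
    rw [← mulVec_smul]
    exact hT.conjTranspose_mulVec_eq_zero_of_mul_mul_conjTranspose F hBx
  rw [(smul_eq_zero.mp hc).resolve_right hF, zero_smul]
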